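/- arXiv:2209.10540 — 3 statements merged into one kernel-verified Lean document; each statement's English description precedes it below -/
import Mathlib

section
/- Let φ : [0,∞) → [0,∞) be measurable with lim_{t→0⁺} φ(t) = φ(0) and suppose ∫_0^∞ t^{-s₀} φ(t) dt < ∞ for some s₀ ∈ (0,1). Then lim_{s→1⁻} (1-s) ∫_0^∞ t^{-s} φ(t) dt = φ(0). -/
open MeasureTheory Filter

lemma key_rpow_bound (δ t s₀ s : ℝ) (hδ0 : 0 < δ) (hδ1 : δ ≤ 1) (ht : δ ≤ t)
    (hs₀s : s₀ ≤ s) (hs1 : s ≤ 1) : t ^ (-s) ≤ δ ^ (s₀ - 1) * t ^ (-s₀) := by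
  have ht0 : 0 < t := lt_of_lt_of_le hδ0 ht
  have h1 : t ^ (-s) = t ^ (s₀ - s) * t ^ (-s₀) := by
    rw [← Real.rpow_add ht0]; ring_nf
  rw [h1]
  have h2 : t ^ (s₀ - s) ≤ δ ^ (s₀ - 1) := by
    rcases le_total t 1 with h | h
    · calc t ^ (s₀ - s) ≤ δ ^ (s₀ - s) :=
            Real.rpow_le_rpow_of_nonpos hδ0 ht (by linarith)
        _ ≤ δ ^ (s₀ - 1) :=
            Real.rpow_le_rpow_of_exponent_ge hδ0 hδ1 (by linarith)
    · calc t ^ (s₀ - s) ≤ 1 :=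
            Real.rpow_le_one_of_one_le_of_nonpos h (by linarith)
        _ ≤ δ ^ (s₀ - 1) :=
            Real.one_le_rpow_of_pos_of_le_one_of_nonpos hδ0 hδ1 (by linarith)
  exact mul_le_mul_of_nonneg_right h2 (Real.rpow_nonneg ht0.le _)

set_option maxHeartbeats 1000000 in
theorem stmt_7 (φ : ℝ → ℝ) (hmeas : Measurable φ) (hnonneg : ∀ t, 0 ≤ t → 0 ≤ φ t)
    (hcont : Tendsto φ (nhdsWithin 0 (Set.Ioi 0)) (nhds (φ 0)))
    (s₀ : ℝ) (hs₀ : s₀ ∈ Set.Ioo (0 : ℝ) 1)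
    (hint : IntegrableOn (fun t => t ^ (-s₀) * φ t) (Set.Ioi 0) volume) :
    Tendsto (fun s : ℝ => (1 - s) * ∫ t in Set.Ioi (0 : ℝ), t ^ (-s) * φ t)
      (nhdsWithin 1 (Set.Iio 1)) (nhds (φ 0)) := by
  set c := φ 0 with hc_def
  have hc : 0 ≤ c := hnonneg 0 le_rfl
  set K : ℝ := ∫ t in Set.Ioi (0:ℝ), t ^ (-s₀) * φ t with hK_def
  have hK : 0 ≤ K := by
    apply setIntegral_nonneg measurableSet_Ioi
    intro t ht
    exact mul_nonneg (Real.rpow_nonneg (le_of_lt ht) _) (hnonneg t (le_of_lt ht))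
  rw [Metric.tendsto_nhds]
  intro ε hε
  have hε3 : 0 < ε / 3 := by linarith
  -- choose δ from continuity
  rw [Metric.tendsto_nhdsWithin_nhds] at hcont
  obtain ⟨δ₁, hδ₁, hδ₁p⟩ := hcont (ε/3) hε3
  set δ : ℝ := min (δ₁/2) 1 with hδ_def
  have hδ0 : 0 < δ := lt_min (by linarith) one_pos
  have hδ1 : δ ≤ 1 := min_le_right _ _
  have hφb : ∀ t ∈ Set.Ioc (0:ℝ) δ, |φ t - c| < ε/3 := by
    intro t ht
    have := hδ₁p (x := t) ht.1 ?_
    · rwa [Real.dist_eq] at this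
    · rw [Real.dist_eq, sub_zero, abs_of_pos ht.1]
      calc t ≤ δ := ht.2
        _ ≤ δ₁/2 := min_le_left _ _
        _ < δ₁ := by linarith
  -- eventual facts
  have hev1 : ∀ᶠ s in nhdsWithin 1 (Set.Iio 1), s₀ < s :=
    Filter.Eventually.filter_mono nhdsWithin_le_nhds (eventually_gt_nhds hs₀.2)
  have hev2 : ∀ᶠ s : ℝ in nhdsWithin 1 (Set.Iio 1), s ∈ Set.Iio 1 :=
    eventually_mem_nhdsWithin
  have htend1 : Tendsto (fun s : ℝ => (1 - s) * (δ ^ (s₀ - 1) * K)) (nhds 1) (nhds 0) := by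
    have h : Continuous (fun s : ℝ => (1 - s) * (δ ^ (s₀ - 1) * K)) :=
      (continuous_const.sub continuous_id).mul continuous_const
    have := h.tendsto (1:ℝ)
    simpa using this
  have hev3 : ∀ᶠ s : ℝ in nhdsWithin 1 (Set.Iio 1), (1 - s) * (δ ^ (s₀ - 1) * K) < ε/3 :=
    (htend1.mono_left nhdsWithin_le_nhds).eventually (eventually_lt_nhds hε3)
  have htend2 : Tendsto (fun s : ℝ => c * (1 - δ ^ (1 - s))) (nhds 1) (nhds 0) := by
    have hrw : (fun s : ℝ => c * (1 - δ ^ (1 - s)))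
        = fun s : ℝ => c * (1 - Real.exp ((1 - s) * Real.log δ)) := by
      funext s
      rw [Real.rpow_def_of_pos hδ0]
      ring_nf
    rw [hrw]
    have h : Continuous fun s : ℝ => c * (1 - Real.exp ((1 - s) * Real.log δ)) :=
      continuous_const.mul (continuous_const.sub (Real.continuous_exp.comp
        ((continuous_const.sub continuous_id).mul continuous_const)))
    have := h.tendsto (1:ℝ)
    simpa using this
  have hev4 : ∀ᶠ s : ℝ in nhdsWithin 1 (Set.Iio 1), c * (1 - δ ^ (1 - s)) < ε/3 :=
    (htend2.mono_left nhdsWithin_le_nhds).eventually (eventually_lt_nhds hε3)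
  filter_upwards [hev1, hev2, hev3, hev4] with s hs₀s hs1 hR hD
  -- fixed s, s₀ < s < 1
  rw [Set.mem_Iio] at hs1
  have hs0pos : 0 < s := lt_trans hs₀.1 hs₀s
  have h1s : 0 < 1 - s := by linarith
  -- integrability on Ioc 0 δ
  have hmeas_f : Measurable fun t : ℝ => t ^ (-s) * φ t := by
    have h1 : Measurable fun t : ℝ => t ^ (-s) := by measurability
    exact h1.mul hmeas
  have hrpow_int : IntegrableOn (fun t : ℝ => t ^ (-s)) (Set.Ioc 0 δ) volume := by
    have := intervalIntegral.intervalIntegrable_rpow' (a := 0) (b := δ)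
      (r := -s) (by linarith)
    rwa [intervalIntegrable_iff_integrableOn_Ioc_of_le hδ0.le] at this
  have hIntg : IntegrableOn (fun t : ℝ => (c + ε/3) * t ^ (-s)) (Set.Ioc 0 δ) volume :=
    hrpow_int.const_mul _
  have hIntg' : IntegrableOn (fun t : ℝ => (c - ε/3) * t ^ (-s)) (Set.Ioc 0 δ) volume :=
    hrpow_int.const_mul _
  have hIntA : IntegrableOn (fun t : ℝ => t ^ (-s) * φ t) (Set.Ioc 0 δ) volume := by
    apply Integrable.mono' hIntg hmeas_f.aestronglyMeasurable.restrict
    rw [ae_restrict_iff' measurableSet_Ioc]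
    filter_upwards with t ht
    have ht0 : 0 < t := ht.1
    have h1 : 0 ≤ t ^ (-s) := Real.rpow_nonneg ht0.le _
    have h2 : 0 ≤ φ t := hnonneg t ht0.le
    rw [Real.norm_eq_abs, abs_of_nonneg (mul_nonneg h1 h2), mul_comm ((c + ε/3)) _]
    exact mul_le_mul_of_nonneg_left (by have := hφb t ht; cases abs_lt.mp this; linarith) h1
  -- integrability on Ioi δ
  have hint_s₀_δ : IntegrableOn (fun t : ℝ => t ^ (-s₀) * φ t) (Set.Ioi δ) volume :=
    hint.mono_set (Set.Ioi_subset_Ioi hδ0.le)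
  have hIntgB : IntegrableOn (fun t : ℝ => δ ^ (s₀ - 1) * (t ^ (-s₀) * φ t))
      (Set.Ioi δ) volume := hint_s₀_δ.const_mul _
  have hptB : ∀ t ∈ Set.Ioi δ, t ^ (-s) * φ t ≤ δ ^ (s₀ - 1) * (t ^ (-s₀) * φ t) := by
    intro t ht
    have ht0 : 0 < t := lt_of_lt_of_le hδ0 (le_of_lt ht)
    have hkey := key_rpow_bound δ t s₀ s hδ0 hδ1 (le_of_lt ht) hs₀s.le (by linarith)
    calc t ^ (-s) * φ t ≤ δ ^ (s₀ - 1) * t ^ (-s₀) * φ t :=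
          mul_le_mul_of_nonneg_right hkey (hnonneg t ht0.le)
      _ = δ ^ (s₀ - 1) * (t ^ (-s₀) * φ t) := by ring
  have hIntB : IntegrableOn (fun t : ℝ => t ^ (-s) * φ t) (Set.Ioi δ) volume := by
    apply Integrable.mono' hIntgB hmeas_f.aestronglyMeasurable.restrict
    rw [ae_restrict_iff' measurableSet_Ioi]
    filter_upwards with t ht
    have ht0 : 0 < t := lt_of_lt_of_le hδ0 (le_of_lt ht)
    rw [Real.norm_eq_abs,
      abs_of_nonneg (mul_nonneg (Real.rpow_nonneg ht0.le _) (hnonneg t ht0.le))]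
    exact hptB t ht
  -- split integral
  set A : ℝ := ∫ t in Set.Ioc (0:ℝ) δ, t ^ (-s) * φ t with hA_def
  set B : ℝ := ∫ t in Set.Ioi δ, t ^ (-s) * φ t with hB_def
  have hsplit : (∫ t in Set.Ioi (0:ℝ), t ^ (-s) * φ t) = A + B := by
    rw [hA_def, hB_def, ← setIntegral_union (Set.Ioc_disjoint_Ioi le_rfl)
      measurableSet_Ioi hIntA hIntB, Set.Ioc_union_Ioi_eq_Ioi hδ0.le]
  -- value of ∫ t^{-s} on Ioc 0 δ
  have hIoc : (∫ t in Set.Ioc (0:ℝ) δ, t ^ (-s)) = δ ^ (1 - s) / (1 - s) := by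
    rw [← intervalIntegral.integral_of_le hδ0.le,
      integral_rpow (Or.inl (by linarith : (-1:ℝ) < -s))]
    rw [Real.zero_rpow (by linarith : -s + 1 ≠ 0)]
    ring_nf
  -- bounds on A
  have hAub : A ≤ (c + ε/3) * (δ ^ (1 - s) / (1 - s)) := by
    calc A ≤ ∫ t in Set.Ioc (0:ℝ) δ, (c + ε/3) * t ^ (-s) := by
          apply setIntegral_mono_on hIntA hIntg measurableSet_Ioc
          intro t ht
          have h1 : 0 ≤ t ^ (-s) := Real.rpow_nonneg ht.1.le _
          rw [mul_comm ((c + ε/3)) _]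
          exact mul_le_mul_of_nonneg_left
            (by have := hφb t ht; cases abs_lt.mp this; linarith) h1
      _ = (c + ε/3) * (δ ^ (1 - s) / (1 - s)) := by
          rw [integral_const_mul, hIoc]
  have hAlb : (c - ε/3) * (δ ^ (1 - s) / (1 - s)) ≤ A := by
    calc (c - ε/3) * (δ ^ (1 - s) / (1 - s))
        = ∫ t in Set.Ioc (0:ℝ) δ, (c - ε/3) * t ^ (-s) := by
          rw [integral_const_mul, hIoc]
      _ ≤ A := by
          apply setIntegral_mono_on hIntg' hIntA measurableSet_Ioc
          intro t ht
          have h1 : 0 ≤ t ^ (-s) := Real.rpow_nonneg ht.1.le _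
          rw [mul_comm ((c - ε/3)) _]
          exact mul_le_mul_of_nonneg_left
            (by have := hφb t ht; cases abs_lt.mp this; linarith) h1
  -- bounds on B
  have hB0 : 0 ≤ B := by
    apply setIntegral_nonneg measurableSet_Ioi
    intro t ht
    have ht0 : 0 < t := lt_of_lt_of_le hδ0 (le_of_lt ht)
    exact mul_nonneg (Real.rpow_nonneg ht0.le _) (hnonneg t ht0.le)
  have hBub : B ≤ δ ^ (s₀ - 1) * K := by
    calc B ≤ ∫ t in Set.Ioi δ, δ ^ (s₀ - 1) * (t ^ (-s₀) * φ t) :=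
          setIntegral_mono_on hIntB hIntgB measurableSet_Ioi hptB
      _ = δ ^ (s₀ - 1) * ∫ t in Set.Ioi δ, t ^ (-s₀) * φ t := integral_const_mul _ _
      _ ≤ δ ^ (s₀ - 1) * K := by
          apply mul_le_mul_of_nonneg_left _ (Real.rpow_nonneg hδ0.le _)
          apply setIntegral_mono_set hint
          · rw [EventuallyLE, ae_restrict_iff' measurableSet_Ioi]
            filter_upwards with t ht
            exact mul_nonneg (Real.rpow_nonneg (le_of_lt ht) _) (hnonneg t (le_of_lt ht))
          · exact HasSubset.Subset.eventuallyLE (Set.Ioi_subset_Ioi hδ0.le)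
  -- final arithmetic
  have hd1 : δ ^ (1 - s) ≤ 1 := Real.rpow_le_one hδ0.le hδ1 (by linarith)
  have hd0 : 0 < δ ^ (1 - s) := Real.rpow_pos_of_pos hδ0 _
  set d : ℝ := δ ^ (1 - s)
  have hne : (1 - s) ≠ 0 := ne_of_gt h1s
  have key : ∀ x : ℝ, (1 - s) * (x * (d / (1 - s))) = x * d := by
    intro x
    field_simp
  have hAub' : (1 - s) * A ≤ (c + ε/3) * d := by
    have h := mul_le_mul_of_nonneg_left hAub h1s.le
    rwa [key] at h
  have hAlb' : (c - ε/3) * d ≤ (1 - s) * A := by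
    have h := mul_le_mul_of_nonneg_left hAlb h1s.le
    rwa [key] at h
  have hBub' : (1 - s) * B ≤ (1 - s) * (δ ^ (s₀ - 1) * K) :=
    mul_le_mul_of_nonneg_left hBub h1s.le
  have hB0' : 0 ≤ (1 - s) * B := mul_nonneg h1s.le hB0
  rw [hsplit, Real.dist_eq, abs_lt]
  constructor <;> nlinarith [mul_nonneg hc (sub_nonneg.mpr hd1)]
end

section
/- For non-zero f ∈ W^{s,p}(ℝⁿ) with 0 < s < 1, 1 < p < n/s, there exists c > 0 depending only on f and p such that for every ξ ∈ S^{n-1} and every s ∈ (0,1): ∫_0^∞ t^{-ps-1} ∫_{ℝⁿ} |f(x+tξ)−f(x)|^p dx dt ≥ c. Equivalently, the fractional L^p polar projection body Π*_{s,p} f is contained in c^{-1/(ps)} B^n, uniformly bounded. -/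
/-!
Translating `f` by a vector `v` far from the origin moves the part of `f` concentrated on a large
ball `B` into the complement of `B`, where `f` has small `L^p` norm; hence
`‖f(· + v) - f‖_p ≥ ‖f‖_p / 2` for all large `‖v‖`. For `t ≥ R` the inner integral is then at least
`(‖f‖_p / 2)^p`, and on `(R, R + 1]` the weight `t^(-ps-1)` is at least `(R + 1)^(-p-1)`, uniformly
in `s ∈ (0, 1)` and in the direction `ξ`.
-/

open MeasureTheory Filter Topology Metric
open scoped ENNReal

namespace MeasureTheory

variable {α E : Type*} [NormedAddCommGroup E] [MeasurableSpace α] {μ : Measure α} {p : ℝ≥0∞}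

theorem MemLp.tendsto_eLpNorm_restrict_compl_ball [PseudoMetricSpace α] [OpensMeasurableSpace α]
    {f : α → E} (hf : MemLp f p μ) (hp_top : p ≠ ∞) (x : α) :
    Tendsto (fun R : ℝ => eLpNorm f p (μ.restrict (ball x R)ᶜ)) atTop (𝓝 0) := by
  rcases eq_or_ne p 0 with rfl | hp0
  · simp
  simp_rw [eLpNorm_eq_lintegral_rpow_enorm_toReal hp0 hp_top]
  have htail : Tendsto (fun R : ℝ => ∫⁻ y in (ball x R)ᶜ, ‖f y‖ₑ ^ p.toReal ∂μ) atTop (𝓝 0) := by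
    simp_rw [← lintegral_indicator isOpen_ball.measurableSet.compl]
    rw [← lintegral_zero (μ := μ)]
    refine tendsto_lintegral_filter_of_dominated_convergence' (fun y => ‖f y‖ₑ ^ p.toReal)
      (Eventually.of_forall fun R => ?_) (Eventually.of_forall fun R => ae_of_all _ fun y => ?_)
      ?_ (ae_of_all _ fun y => ?_)
    · exact (hf.1.enorm.pow_const _).indicator isOpen_ball.measurableSet.compl
    · exact Set.indicator_le_self _ _ y
    · exact (lintegral_rpow_enorm_lt_top_of_eLpNorm_lt_top hp0 hp_top hf.2).ne
    · refine tendsto_const_nhds.congr' ?_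
      filter_upwards [eventually_gt_atTop (dist y x)] with R hR
      simp [mem_ball.2 hR]
  have := (ENNReal.continuous_rpow_const (y := 1 / p.toReal)).tendsto 0 |>.comp htail
  rwa [ENNReal.zero_rpow_of_pos (one_div_pos.2 (ENNReal.toReal_pos hp0 hp_top))] at this

theorem eLpNorm_le_eLpNorm_translate_sub_add_compl_ball {G : Type*} [NormedAddCommGroup G]
    [MeasurableSpace G] [BorelSpace G] {μ : Measure G} [μ.IsAddRightInvariant]
    {f : G → E} (hf : AEStronglyMeasurable f μ) (hp : 1 ≤ p) {R : ℝ} {v : G} (hv : 2 * R ≤ ‖v‖) :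
    eLpNorm f p μ ≤
      eLpNorm (fun x => f (x + v) - f x) p μ + 2 * eLpNorm f p (μ.restrict (ball 0 R)ᶜ) := by
  set B := ball (0 : G) R
  have hτ : MeasurePreserving (· + v) μ μ := measurePreserving_add_right μ v
  have hfτ : AEStronglyMeasurable (fun x => f (x + v)) μ := hf.comp_measurePreserving hτ
  have hsplit : eLpNorm f p μ ≤ eLpNorm f p (μ.restrict B) + eLpNorm f p (μ.restrict Bᶜ) := by
    rw [← eLpNorm_indicator_eq_eLpNorm_restrict isOpen_ball.measurableSet,
      ← eLpNorm_indicator_eq_eLpNorm_restrict isOpen_ball.measurableSet.compl]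
    conv_lhs => rw [← B.indicator_self_add_compl f]
    exact eLpNorm_add_le (hf.indicator isOpen_ball.measurableSet)
      (hf.indicator isOpen_ball.measurableSet.compl) hp
  have hnear : eLpNorm f p (μ.restrict B) ≤
      eLpNorm (fun x => f (x + v) - f x) p μ + eLpNorm (fun x => f (x + v)) p (μ.restrict B) := by
    calc eLpNorm f p (μ.restrict B)
        = eLpNorm ((fun x => f (x + v)) - fun x => f (x + v) - f x) p (μ.restrict B) := by
          congr 1; funext x; simp
      _ ≤ eLpNorm (fun x => f (x + v)) p (μ.restrict B)
          + eLpNorm (fun x => f (x + v) - f x) p (μ.restrict B) :=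
          eLpNorm_sub_le hfτ.restrict (hfτ.sub hf).restrict hp
      _ ≤ _ := by
          rw [add_comm]; exact add_le_add (eLpNorm_mono_measure _ Measure.restrict_le_self) le_rfl
  have hfar : eLpNorm (fun x => f (x + v)) p (μ.restrict B) ≤ eLpNorm f p (μ.restrict Bᶜ) := by
    have hpre : (· + v) ⁻¹' ball v R = B := by ext x; simp [B]
    have hdisj : ball v R ⊆ Bᶜ := fun x hx => by
      rw [mem_ball, dist_comm, dist_eq_norm] at hx
      simp only [B, Set.mem_compl_iff, mem_ball_zero_iff, not_lt]
      linarith [norm_sub_norm_le v x]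
    calc eLpNorm (fun x => f (x + v)) p (μ.restrict B)
        = eLpNorm f p (μ.restrict (ball v R)) := by
          rw [← hpre]
          exact eLpNorm_comp_measurePreserving hf.restrict
            (hτ.restrict_preimage isOpen_ball.measurableSet)
      _ ≤ _ := eLpNorm_mono_measure _ (Measure.restrict_mono hdisj le_rfl)
  calc eLpNorm f p μ
      ≤ eLpNorm (fun x => f (x + v) - f x) p μ + eLpNorm f p (μ.restrict Bᶜ)
        + eLpNorm f p (μ.restrict Bᶜ) :=
        hsplit.trans (add_le_add (hnear.trans (add_le_add le_rfl hfar)) le_rfl)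
    _ = _ := by rw [two_mul, add_assoc]

theorem MemLp.exists_half_eLpNorm_le_eLpNorm_translate_sub {G : Type*} [NormedAddCommGroup G]
    [MeasurableSpace G] [BorelSpace G] {μ : Measure G} [μ.IsAddRightInvariant] {f : G → E}
    (hf : MemLp f p μ) (hp : 1 ≤ p) (hp_top : p ≠ ∞) :
    ∃ R : ℝ, ∀ v : G, R ≤ ‖v‖ →
      eLpNorm f p μ / 2 ≤ eLpNorm (fun x => f (x + v) - f x) p μ := by
  set A := eLpNorm f p μ
  rcases eq_or_ne A 0 with hA | hA
  · exact ⟨0, fun v _ => by simp [hA]⟩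
  have htail := ENNReal.Tendsto.const_mul (a := 2)
    (hf.tendsto_eLpNorm_restrict_compl_ball hp_top 0) (Or.inr ENNReal.ofNat_ne_top)
  rw [mul_zero] at htail
  obtain ⟨R, hR⟩ := ((tendsto_order.1 htail).2 (A / 2)
    (ENNReal.half_pos hA)).exists_forall_of_atTop
  refine ⟨2 * R, fun v hv => ?_⟩
  refine ENNReal.le_of_add_le_add_right (ENNReal.div_lt_top hf.2.ne two_ne_zero).ne ?_
  rw [ENNReal.add_halves]
  exact (eLpNorm_le_eLpNorm_translate_sub_add_compl_ball hf.1 hp hv).trans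
    (add_le_add le_rfl (hR R le_rfl).le)

theorem lintegral_ofReal_abs_rpow_eq_eLpNorm_rpow {p : ℝ} (hp : 0 < p) (g : α → ℝ) :
    ∫⁻ x, ENNReal.ofReal (|g x| ^ p) ∂μ = eLpNorm g (ENNReal.ofReal p) μ ^ p := by
  rw [eLpNorm_eq_eLpNorm' (by simpa using hp) ENNReal.ofReal_ne_top,
    ENNReal.toReal_ofReal hp.le, ← lintegral_rpow_enorm_eq_rpow_eLpNorm' hp]
  congr 1 with x
  rw [Real.enorm_eq_ofReal_abs, ENNReal.ofReal_rpow_of_nonneg (abs_nonneg _) hp.le]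

theorem ofReal_rpow_mul_le_setLIntegral_Ioi_rpow_mul {F : ℝ → ℝ≥0∞} {m : ℝ≥0∞} {T γ δ : ℝ}
    (hT : 1 ≤ T) (hγ : γ ≤ 0) (hγδ : γ ≤ δ) (hF : ∀ t, T ≤ t → m ≤ F t) :
    ENNReal.ofReal ((T + 1) ^ γ) * m ≤ ∫⁻ t in Set.Ioi 0, ENNReal.ofReal (t ^ δ) * F t := by
  calc ENNReal.ofReal ((T + 1) ^ γ) * m
      = ∫⁻ _ in Set.Ioc T (T + 1), ENNReal.ofReal ((T + 1) ^ γ) * m := by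
        simp [Real.volume_Ioc]
    _ ≤ ∫⁻ t in Set.Ioc T (T + 1), ENNReal.ofReal (t ^ δ) * F t := by
        refine setLIntegral_mono' measurableSet_Ioc fun t ⟨hTt, htT⟩ => ?_
        have ht1 : 1 ≤ t := hT.trans hTt.le
        gcongr
        · calc (T + 1) ^ γ ≤ t ^ γ := Real.rpow_le_rpow_of_nonpos (by linarith) htT hγ
            _ ≤ t ^ δ := Real.rpow_le_rpow_of_exponent_le ht1 hγδ
        · exact hF t hTt.le
    _ ≤ _ := lintegral_mono_set fun t ht => (zero_lt_one.trans_le hT).trans ht.1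

end MeasureTheory

theorem stmt_11_general (n : ℕ) (p : ℝ) (hp : 1 < p)
    (f : EuclideanSpace ℝ (Fin n) → ℝ)
    (hf : MemLp f (ENNReal.ofReal p) volume)
    (hne : ¬ f =ᵐ[(volume : Measure (EuclideanSpace ℝ (Fin n)))] 0) :
    ∃ c : ℝ, 0 < c ∧ ∀ s ∈ Set.Ioo (0 : ℝ) 1, ∀ ξ : EuclideanSpace ℝ (Fin n), ‖ξ‖ = 1 →
      ENNReal.ofReal c ≤
        ∫⁻ t in Set.Ioi (0 : ℝ), ENNReal.ofReal (t ^ (-(p * s) - 1)) *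
          ∫⁻ x, ENNReal.ofReal (|f (x + t • ξ) - f x| ^ p) := by
  have hp0 : 0 < p := zero_lt_one.trans hp
  obtain ⟨R, hR⟩ := hf.exists_half_eLpNorm_le_eLpNorm_translate_sub
    (ENNReal.one_le_ofReal.2 hp.le) ENNReal.ofReal_ne_top
  set m := (eLpNorm f (ENNReal.ofReal p) volume / 2) ^ p
  have hm0 : m ≠ 0 := by
    have : eLpNorm f (ENNReal.ofReal p) volume ≠ 0 :=
      mt (eLpNorm_eq_zero_iff hf.1 (by simpa using hp0)).1 hne
    simp [m, ENNReal.rpow_eq_zero_iff, this, hp0, hp0.le, not_lt_of_ge]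
  have hm_top : m ≠ ⊤ := (ENNReal.rpow_lt_top_of_nonneg hp0.le
    (ENNReal.div_lt_top hf.2.ne two_ne_zero).ne).ne
  refine ⟨(max R 1 + 1) ^ (-p - 1) * m.toReal,
    mul_pos (by positivity) (ENNReal.toReal_pos hm0 hm_top), fun s hs ξ hξ => ?_⟩
  rw [ENNReal.ofReal_mul (by positivity), ENNReal.ofReal_toReal hm_top]
  refine ofReal_rpow_mul_le_setLIntegral_Ioi_rpow_mul (le_max_right _ _) (by linarith)
    (by nlinarith [hs.2]) fun t ht => ?_
  rw [lintegral_ofReal_abs_rpow_eq_eLpNorm_rpow hp0]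
  refine ENNReal.rpow_le_rpow (hR _ ?_) hp0.le
  rw [norm_smul, hξ, mul_one, Real.norm_eq_abs]
  exact (le_max_left _ _).trans (ht.trans (le_abs_self t))

theorem stmt_11 (n : ℕ) (p : ℝ) (hp : 1 < p)
    (f : EuclideanSpace ℝ (Fin n) → ℝ)
    (hf : MemLp f (ENNReal.ofReal p) volume)
    (hne : ¬ f =ᵐ[(volume : Measure (EuclideanSpace ℝ (Fin n)))] 0)
    (hsob : ∀ s ∈ Set.Ioo (0 : ℝ) 1, p < n / s →
      ∫⁻ x, ∫⁻ y, ENNReal.ofReal (|f x - f y| ^ p / ‖x - y‖ ^ ((n : ℝ) + p * s)) < ⊤) :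
    ∃ c : ℝ, 0 < c ∧ ∀ s ∈ Set.Ioo (0 : ℝ) 1, ∀ ξ : EuclideanSpace ℝ (Fin n), ‖ξ‖ = 1 →
      ENNReal.ofReal c ≤
        ∫⁻ t in Set.Ioi (0 : ℝ), ENNReal.ofReal (t ^ (-(p * s) - 1)) *
          ∫⁻ x, ENNReal.ofReal (|f (x + t • ξ) - f x| ^ p) :=
  stmt_11_general n p hp f hf hne
end

section
/- For ℝⁿ and f ∈ W^{s,p}(ℝⁿ), a volume-preserving linear map φ ∈ SL(n) satisfies Π*_{s,p}(f ∘ φ^{-1}) = φ(Π*_{s,p} f), so that |Π*_{s,p}(f∘φ^{-1})| = |Π*_{s,p} f|; i.e., the volume of the fractional L^p polar projection body is an SL(n)-invariant of f. -/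
open MeasureTheory
open scoped ENNReal

/-- The `s`-fractional `L^p` polar projection body of `f`: the star-shaped set whose
gauge satisfies `‖ξ‖^{ps} = ∫_0^∞ t^{-ps-1} ∫ |f(x+tξ)-f(x)|^p dx dt`, realized as the
set of `ξ` where this quantity is at most `1`. -/
def fracPolarProjBody (n : ℕ) (s p : ℝ) (f : EuclideanSpace ℝ (Fin n) → ℝ) :
    Set (EuclideanSpace ℝ (Fin n)) :=
  {ξ | (∫⁻ t in Set.Ioi (0 : ℝ), ENNReal.ofReal (t ^ (-(p * s) - 1)) *
      ∫⁻ x, ENNReal.ofReal (|f (x + t • ξ) - f x| ^ p)) ≤ 1}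

/-!
Since `det φ = 1`, the map `φ` preserves Lebesgue measure, so substituting `x ↦ φ x` in the inner
integral turns the increments of `f ∘ φ⁻¹` in direction `ξ` into the increments of `f` in
direction `φ⁻¹ ξ`. Hence `ξ` lies in the body of `f ∘ φ⁻¹` iff `φ⁻¹ ξ` lies in the body of `f`,
and the two bodies have the same volume, again because `det φ = 1`.
-/

section LinearEquiv

variable {E : Type*} [NormedAddCommGroup E] [NormedSpace ℝ E] [MeasurableSpace E] [BorelSpace E]
  [FiniteDimensional ℝ E]

theorem LinearEquiv.measurePreserving_of_det_eq_one (μ : Measure E) [μ.IsAddHaarMeasure]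
    (φ : E ≃ₗ[ℝ] E) (hdet : LinearMap.det (φ : E →ₗ[ℝ] E) = 1) : MeasurePreserving φ μ μ where
  measurable := φ.toContinuousLinearEquiv.continuous.measurable
  map_eq := by
    simpa [hdet] using Measure.map_linearMap_addHaar_eq_smul_addHaar μ (f := (φ : E →ₗ[ℝ] E))
      (by simp [hdet])

theorem LinearEquiv.lintegral_comp_symm_add {μ : Measure E} (φ : E ≃ₗ[ℝ] E)
    (hφ : MeasurePreserving φ μ μ) (F : E → E → ℝ≥0∞) (v : E) :
    ∫⁻ x, F (φ.symm (x + v)) (φ.symm x) ∂μ = ∫⁻ x, F (x + φ.symm v) x ∂μ := by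
  rw [← hφ.lintegral_comp_emb φ.toContinuousLinearEquiv.toHomeomorph.measurableEmbedding]
  simp only [map_add, LinearEquiv.symm_apply_apply]

end LinearEquiv

section FracPolarProjBody

variable {n : ℕ} {s p : ℝ} {f : EuclideanSpace ℝ (Fin n) → ℝ}
  {φ : EuclideanSpace ℝ (Fin n) ≃ₗ[ℝ] EuclideanSpace ℝ (Fin n)}

theorem mem_fracPolarProjBody_comp_symm_iff (hφ : MeasurePreserving φ volume volume)
    (ξ : EuclideanSpace ℝ (Fin n)) :
    ξ ∈ fracPolarProjBody n s p (f ∘ φ.symm) ↔ φ.symm ξ ∈ fracPolarProjBody n s p f := by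
  simp only [fracPolarProjBody, Set.mem_ofPred_eq, Function.comp_apply, ← map_smul,
    φ.lintegral_comp_symm_add hφ (fun y x => ENNReal.ofReal (|f y - f x| ^ p))]

theorem fracPolarProjBody_comp_symm (hφ : MeasurePreserving φ volume volume) :
    fracPolarProjBody n s p (f ∘ φ.symm) = φ '' fracPolarProjBody n s p f := by
  ext ξ
  rw [LinearEquiv.image_eq_preimage_symm]
  exact mem_fracPolarProjBody_comp_symm_iff hφ ξ

end FracPolarProjBody

theorem stmt_19_general (n : ℕ) (s p : ℝ)
    (f : EuclideanSpace ℝ (Fin n) → ℝ)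
    (φ : EuclideanSpace ℝ (Fin n) ≃ₗ[ℝ] EuclideanSpace ℝ (Fin n))
    (hdet : LinearMap.det (φ : EuclideanSpace ℝ (Fin n) →ₗ[ℝ] EuclideanSpace ℝ (Fin n)) = 1) :
    fracPolarProjBody n s p (f ∘ φ.symm) = φ '' fracPolarProjBody n s p f ∧
      volume (fracPolarProjBody n s p (f ∘ φ.symm)) = volume (fracPolarProjBody n s p f) := by
  have hφ := φ.measurePreserving_of_det_eq_one volume hdet
  refine ⟨fracPolarProjBody_comp_symm hφ, ?_⟩
  rw [fracPolarProjBody_comp_symm hφ]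
  simpa [hdet] using Measure.addHaar_image_linearMap volume φ.toLinearMap _

theorem stmt_19 (n : ℕ) (s p : ℝ) (hs : s ∈ Set.Ioo (0 : ℝ) 1) (hp : 1 < p) (hpn : p < n / s)
    (f : EuclideanSpace ℝ (Fin n) → ℝ)
    (hf : MemLp f (ENNReal.ofReal p) volume)
    (hgag : ∫⁻ x, ∫⁻ y, ENNReal.ofReal (|f x - f y| ^ p / ‖x - y‖ ^ ((n : ℝ) + p * s)) < ⊤)
    (φ : EuclideanSpace ℝ (Fin n) ≃ₗ[ℝ] EuclideanSpace ℝ (Fin n))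
    (hdet : LinearMap.det (φ : EuclideanSpace ℝ (Fin n) →ₗ[ℝ] EuclideanSpace ℝ (Fin n)) = 1) :
    fracPolarProjBody n s p (f ∘ φ.symm) = φ '' fracPolarProjBody n s p f ∧
      volume (fracPolarProjBody n s p (f ∘ φ.symm)) = volume (fracPolarProjBody n s p f) :=
  stmt_19_general n s p f φ hdet
end
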